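/- For every natural number ν, ∑_{k=0}^{2ν} (−1)^k · C(2ν+1, k+1) · 2^{−k} · C(2k, k) = 2^{−2ν} · (2ν+1) · C(2ν, ν), with the sum taken over rational (or real) numbers. -/

import Mathlib

/-!
Pascal's rule turns the left side into `∑_{j ≤ 2ν} g j` with
`g j = ∑_k C(j, k) C(2k, k) (-1/2)^k`. This `g j` is the coefficient of `X^j` in
`(X - (1 + X)^2 / 2)^j = (-1/2)^j (1 + X^2)^j`, so it vanishes for odd `j` and equals
`C(2m, m) / 4^m` for `j = 2m`. The partial sums of `C(2m, m) / 4^m` are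
`(2ν + 1) C(2ν, ν) / 4^ν`, by induction from `(n + 1) C(2n + 2, n + 1) = 2 (2n + 1) C(2n, n)`.
-/

open Finset Polynomial

theorem sum_range_choose_succ_mul_eq_sum_range_sum {R : Type*} [Semiring R] (a : ℕ → R)
    (n : ℕ) :
    ∑ k ∈ range n, (n.choose (k + 1) : R) * a k =
      ∑ j ∈ range n, ∑ k ∈ range (j + 1), (j.choose k : R) * a k := by
  induction n with
  | zero => simp
  | succ n ih =>
    have pascal : ∑ k ∈ range (n + 1), ((n + 1).choose (k + 1) : R) * a k =
        ∑ k ∈ range (n + 1), (n.choose k : R) * a k +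
          ∑ k ∈ range (n + 1), (n.choose (k + 1) : R) * a k := by
      simp only [Nat.choose_succ_succ, Nat.cast_add, add_mul, sum_add_distrib]
    rw [pascal, sum_range_succ (fun k => (n.choose (k + 1) : R) * a k) n, Nat.choose_succ_self,
      Nat.cast_zero, zero_mul, add_zero, ih,
      sum_range_succ (fun j => ∑ k ∈ range (j + 1), (j.choose k : R) * a k) n, add_comm]

theorem sum_range_two_mul_add_one_of_odd_eq_zero {M : Type*} [AddCommMonoid M] (f : ℕ → M)
    (hf : ∀ m, f (2 * m + 1) = 0) (n : ℕ) :
    ∑ j ∈ range (2 * n + 1), f j = ∑ m ∈ range (n + 1), f (2 * m) := by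
  induction n with
  | zero => simp
  | succ n ih =>
    rw [show 2 * (n + 1) + 1 = 2 * n + 1 + 1 + 1 by ring, sum_range_succ, sum_range_succ, ih,
      hf, add_zero, sum_range_succ _ (n + 1)]
    rfl

theorem sum_range_centralBinom_div_four_pow {K : Type*} [Field K] [CharZero K] (n : ℕ) :
    ∑ m ∈ range (n + 1), (m.centralBinom : K) / 4 ^ m =
      (2 * n + 1) * n.centralBinom / 4 ^ n := by
  induction n with
  | zero => simp
  | succ n ih =>
    have h : ((n + 1 : ℕ) : K) * (n + 1).centralBinom = 2 * (2 * n + 1) * n.centralBinom := by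
      exact_mod_cast Nat.succ_mul_centralBinom_succ n
    rw [sum_range_succ, ih, pow_succ]
    push_cast at h ⊢
    linear_combination (-1 / (2 * 4 ^ n)) * h

theorem coeff_X_add_C_mul_one_add_X_sq_pow {R : Type*} [CommSemiring R] (c : R) (n : ℕ) :
    ((X + C c * (1 + X) ^ 2) ^ n).coeff n =
      ∑ k ∈ range (n + 1), (n.choose k : R) * (c ^ k * (2 * k).choose k) := by
  rw [add_comm, add_pow, finsetSum_coeff]
  refine sum_congr rfl fun k hk => ?_
  have hkn : k ≤ n := Nat.lt_succ_iff.mp (mem_range.mp hk)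
  have term : (C c * (1 + X) ^ 2) ^ k * X ^ (n - k) * (n.choose k : R[X]) =
      C (c ^ k * n.choose k) * (1 + X) ^ (2 * k) * X ^ (n - k) := by
    rw [C_mul, C_pow, map_natCast, mul_pow, ← pow_mul]; ring
  rw [term, coeff_mul_X_pow', if_pos (Nat.sub_le n k), Nat.sub_sub_self hkn, coeff_C_mul,
    coeff_one_add_X_pow, mul_left_comm, mul_assoc]

theorem X_add_C_mul_one_add_X_sq {R : Type*} [CommRing R] {c : R} (hc : 2 * c = -1) :
    (X + C c * (1 + X) ^ 2 : R[X]) = C c * (1 + X ^ 2) := by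
  have : C c * 2 = (-1 : R[X]) := by rw [← C_ofNat, ← C_mul, mul_comm, hc, C_neg, C_1]
  linear_combination X * this

theorem one_add_X_sq_pow_eq_expand {R : Type*} [CommSemiring R] (n : ℕ) :
    (1 + X ^ 2 : R[X]) ^ n = expand R 2 ((1 + X) ^ n) := by
  simp

theorem coeff_one_add_X_sq_pow_two_mul {R : Type*} [CommSemiring R] (n j : ℕ) :
    ((1 + X ^ 2 : R[X]) ^ n).coeff (2 * j) = n.choose j := by
  rw [one_add_X_sq_pow_eq_expand, coeff_expand two_pos, if_pos (dvd_mul_right 2 j),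
    Nat.mul_div_cancel_left j two_pos, coeff_one_add_X_pow]

theorem coeff_one_add_X_sq_pow_two_mul_add_one {R : Type*} [CommSemiring R] (n j : ℕ) :
    ((1 + X ^ 2 : R[X]) ^ n).coeff (2 * j + 1) = 0 := by
  rw [one_add_X_sq_pow_eq_expand, coeff_expand two_pos, if_neg (by omega)]

theorem sum_range_choose_mul_pow_mul_choose_two_mul {R : Type*} [CommRing R] {c : R}
    (hc : 2 * c = -1) (n : ℕ) :
    ∑ k ∈ range (n + 1), (n.choose k : R) * (c ^ k * (2 * k).choose k) =
      c ^ n * ((1 + X ^ 2 : R[X]) ^ n).coeff n := by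
  rw [← coeff_X_add_C_mul_one_add_X_sq_pow, X_add_C_mul_one_add_X_sq hc, mul_pow, ← C_pow,
    coeff_C_mul]

/-- Riordan's identity (1.6). -/
theorem riordan_identity_even (ν : ℕ) :
    ∑ k ∈ Finset.range (2 * ν + 1),
      (-1 : ℚ) ^ k * ((2 * ν + 1).choose (k + 1)) * ((2 * k).choose k) / 2 ^ k
      = (2 * ν + 1) * ((2 * ν).choose ν) / 2 ^ (2 * ν) := by
  have hc : 2 * (-1 / 2 : ℚ) = -1 := by norm_num
  calc ∑ k ∈ range (2 * ν + 1),
        (-1 : ℚ) ^ k * ((2 * ν + 1).choose (k + 1)) * ((2 * k).choose k) / 2 ^ k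
      = ∑ k ∈ range (2 * ν + 1),
          ((2 * ν + 1).choose (k + 1) : ℚ) * ((-1 / 2) ^ k * (2 * k).choose k) := by
        refine sum_congr rfl fun k _ => ?_
        rw [div_pow]; ring
    _ = ∑ j ∈ range (2 * ν + 1), (-1 / 2 : ℚ) ^ j * ((1 + X ^ 2 : ℚ[X]) ^ j).coeff j := by
        simp only [sum_range_choose_succ_mul_eq_sum_range_sum,
          sum_range_choose_mul_pow_mul_choose_two_mul hc]
    _ = ∑ m ∈ range (ν + 1), (m.centralBinom : ℚ) / 4 ^ m := by
        rw [sum_range_two_mul_add_one_of_odd_eq_zero _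
          (fun m => by rw [coeff_one_add_X_sq_pow_two_mul_add_one, mul_zero])]
        refine sum_congr rfl fun m _ => ?_
        rw [coeff_one_add_X_sq_pow_two_mul, pow_mul, Nat.centralBinom,
          show (-1 / 2 : ℚ) ^ 2 = 4⁻¹ by norm_num, inv_pow, inv_mul_eq_div]
    _ = (2 * ν + 1) * ((2 * ν).choose ν) / 2 ^ (2 * ν) := by
        rw [sum_range_centralBinom_div_four_pow, pow_mul, Nat.centralBinom]
        norm_num
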